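/- arXiv:1702.07574 — 3 statements merged into one kernel-verified Lean document; each statement's English description precedes it below -/
import Mathlib

section
/- Every k-clean monomial ideal is clean. That is, if I ⊆ S = K[x_1,…,x_n] is a monomial ideal that is k-clean for some integer k ≥ 0, then S/I admits a clean multigraded prime filtration. -/
open MvPolynomial

/-- A monomial ideal: an ideal generated by monomials. -/
def IsMonomialIdeal {K : Type*} [Field K] {σ : Type*}
    (I : Ideal (MvPolynomial σ K)) : Prop :=
  ∃ G : Set (σ →₀ ℕ), I = Ideal.span ((fun a : σ →₀ ℕ => (monomial a (1 : K))) '' G)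

/-- `u = x^a` is a cleaner monomial of `I`: `u` is a non-unit monomial not in `I`
with `min(I + Su) ⊆ min(I)`. -/
def IsCleaner {K : Type*} [Field K] {σ : Type*}
    (I : Ideal (MvPolynomial σ K)) (a : σ →₀ ℕ) : Prop :=
  a ≠ 0 ∧ (monomial a (1 : K)) ∉ I ∧
    (I + Ideal.span {(monomial a (1 : K))}).minimalPrimes ⊆ I.minimalPrimes

/-- `I` has no embedded prime ideals: every associated prime of `S/I` is a minimal prime of `I`. -/
def NoEmbeddedPrimes {K : Type*} [Field K] {σ : Type*}
    (I : Ideal (MvPolynomial σ K)) : Prop :=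
  ∀ P ∈ associatedPrimes (MvPolynomial σ K) (MvPolynomial σ K ⧸ I), P ∈ I.minimalPrimes

/-- `I` is `k`-clean: `I` is prime, or `I` has no embedded primes and there is a cleaner
monomial `u ∉ I` with `|supp u| ≤ k+1` such that `I : u` and `I + Su` are `k`-clean. -/
inductive KClean (K : Type*) [Field K] (σ : Type*) (k : ℕ) :
    Ideal (MvPolynomial σ K) → Prop
  | prime (I : Ideal (MvPolynomial σ K)) (h : I.IsPrime) : KClean K σ k I
  | step (I : Ideal (MvPolynomial σ K)) (a : σ →₀ ℕ)
      (hne : NoEmbeddedPrimes I) (hcl : IsCleaner I a)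
      (hsupp : a.support.card ≤ k + 1)
      (hcolon : KClean K σ k (Submodule.colon I (Ideal.span {(monomial a (1 : K))})))
      (hsum : KClean K σ k (I + Ideal.span {(monomial a (1 : K))})) : KClean K σ k I

/-- A submodule of `S/I` is multigraded iff it is generated by images of monomials. -/
def IsMultigradedSubmodule {K : Type*} [Field K] {σ : Type*}
    (I : Ideal (MvPolynomial σ K)) (N : Submodule (MvPolynomial σ K) (MvPolynomial σ K ⧸ I)) :
    Prop :=
  ∃ A : Set (σ →₀ ℕ),
    N = Submodule.span (MvPolynomial σ K)
      ((fun a : σ →₀ ℕ => Ideal.Quotient.mk I (monomial a (1 : K))) '' A)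

/-- `I` is clean: `S/I` admits a multigraded prime filtration
`0 = M₀ ⊂ M₁ ⊂ ⋯ ⊂ M_r = S/I` whose factors `M_i/M_{i-1}` are isomorphic to `S/P_i`
(with a multidegree shift) for minimal primes `P_i` of `I`. -/
def IsClean {K : Type*} [Field K] {σ : Type*} (I : Ideal (MvPolynomial σ K)) : Prop :=
  ∃ (r : ℕ) (M : Fin (r + 1) → Submodule (MvPolynomial σ K) (MvPolynomial σ K ⧸ I)),
    M 0 = ⊥ ∧ M (Fin.last r) = ⊤ ∧ StrictMono M ∧
    (∀ i, IsMultigradedSubmodule I (M i)) ∧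
    (∀ i : Fin r, ∃ P ∈ I.minimalPrimes,
      Nonempty ((↥(M i.succ) ⧸ (Submodule.comap (M i.succ).subtype (M i.castSucc)))
        ≃ₗ[MvPolynomial σ K] (MvPolynomial σ K ⧸ P)))

/-!
Induction on `k`-cleanness. A prime ideal `I` has the filtration `0 ⊂ S/I`. In the inductive step,
multiplication by the cleaner monomial `u = x^a` and the projection form a short exact sequence
`0 → S/(I : u) → S/I → S/(I + Su) → 0` of multigraded modules, so clean filtrations of the outer
terms glue to a multigraded prime filtration of `S/I`. Its factors are minimal primes of `I`: for
those coming from `I + Su` because `u` is a cleaner monomial, and for those coming from `I : u`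
because a minimal prime of `I : u` is associated to `S/(I : u)`, hence to its image in `S/I`, and
`I` has no embedded primes.
-/

open scoped SetRel

section PrimeFiltration

variable {R M N L : Type*} [CommRing R] [AddCommGroup M] [Module R M] [AddCommGroup N]
  [Module R N] [AddCommGroup L] [Module R L]

variable (M) in
def primeFactorRel (S : Set (Ideal R)) : SetRel (Submodule R M) (Submodule R M) :=
  {p | p.1 < p.2 ∧ ∃ P ∈ S, Nonempty ((p.2 ⧸ p.1.comap p.2.subtype) ≃ₗ[R] R ⧸ P)}

theorem nonempty_subquotient_equiv_of_map (f : M →ₗ[R] N) {M₁ M₂ : Submodule R M}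
    {N₁ N₂ : Submodule R N} (h₂ : M₂.map f = N₂) (h₁ : ∀ x ∈ M₂, f x ∈ N₁ ↔ x ∈ M₁) :
    Nonempty ((M₂ ⧸ M₁.comap M₂.subtype) ≃ₗ[R] (N₂ ⧸ N₁.comap N₂.subtype)) := by
  subst h₂
  let g := (N₁.comap (M₂.map f).subtype).mkQ ∘ₗ f.submoduleMap M₂
  have hg : Function.Surjective g :=
    (Submodule.mkQ_surjective _).comp (f.submoduleMap_surjective M₂)
  have hker : M₁.comap M₂.subtype = LinearMap.ker g := by
    ext x
    simp [g, h₁ x x.2]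
  exact ⟨(Submodule.quotEquivOfEq _ _ hker).trans (g.quotKerEquivOfSurjective hg)⟩

variable {S T U : Set (Ideal R)} {M₁ M₂ : Submodule R M}

theorem primeFactorRel_map {f : M →ₗ[R] N} (hf : Function.Injective f) (hST : S ⊆ T)
    (h : M₁ ~[primeFactorRel M S] M₂) : M₁.map f ~[primeFactorRel N T] M₂.map f := by
  obtain ⟨hlt, P, hP, ⟨e⟩⟩ := h
  refine ⟨Submodule.map_strictMono_of_injective hf hlt, P, hST hP, ?_⟩
  refine (nonempty_subquotient_equiv_of_map f rfl fun x _ => ?_).map fun e' => e'.symm.trans e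
  exact ⟨fun ⟨y, hy, hyx⟩ => hf hyx ▸ hy, Submodule.mem_map_of_mem⟩

theorem primeFactorRel_comap {f : M →ₗ[R] N} (hf : Function.Surjective f) (hST : S ⊆ T)
    {N₁ N₂ : Submodule R N} (h : N₁ ~[primeFactorRel N S] N₂) :
    N₁.comap f ~[primeFactorRel M T] N₂.comap f := by
  obtain ⟨hlt, P, hP, ⟨e⟩⟩ := h
  refine ⟨Submodule.comap_strictMono_of_surjective hf hlt, P, hST hP, ?_⟩
  exact (nonempty_subquotient_equiv_of_map f (Submodule.map_comap_eq_of_surjective hf _)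
    fun _ _ => Iff.rfl).map fun e' => e'.trans e

theorem RelSeries.mem_of_mem_smash {α : Type*} {r : SetRel α α} {p q : RelSeries r}
    {h : p.last = q.head} {x : α} (hx : x ∈ p.smash q h) : x ∈ p ∨ x ∈ q := by
  obtain ⟨i, rfl⟩ := hx
  refine Fin.addCases (m := p.length) (n := q.length + 1)
    (motive := fun i => p.smash q h i ∈ p ∨ p.smash q h i ∈ q) (fun i => ?_) (fun j => ?_) i
  · exact Or.inl ⟨i.castSucc, by simp [RelSeries.smash]⟩
  · exact Or.inr ⟨j, by simp [RelSeries.smash]⟩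

theorem exists_relSeries_primeFactorRel_of_exact {f : M →ₗ[R] N} {g : N →ₗ[R] L}
    (hf : Function.Injective f) (hg : Function.Surjective g) (hfg : Function.Exact f g)
    (hSU : S ⊆ U) (hTU : T ⊆ U)
    (p : RelSeries (primeFactorRel M S)) (hp₀ : p.head = ⊥) (hp : p.last = ⊤)
    (q : RelSeries (primeFactorRel L T)) (hq₀ : q.head = ⊥) (hq : q.last = ⊤) :
    ∃ s : RelSeries (primeFactorRel N U), s.head = ⊥ ∧ s.last = ⊤ ∧
      ∀ x ∈ s, (∃ y ∈ p, x = y.map f) ∨ (∃ y ∈ q, x = y.comap g) := by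
  let p' := p.map ⟨Submodule.map f, primeFactorRel_map hf hSU⟩
  let q' := q.map ⟨Submodule.comap g, primeFactorRel_comap hg hTU⟩
  have hconnect : p'.last = q'.head := by
    change (p.last).map f = (q.head).comap g
    rw [hp, hq₀, Submodule.map_top]
    exact (LinearMap.exact_iff.mp hfg).symm
  refine ⟨p'.smash q' hconnect, ?_, ?_, fun x hx => ?_⟩
  · simp [p', hp₀]
  · simp [q', hq]
  · rcases RelSeries.mem_of_mem_smash hx with ⟨i, rfl⟩ | ⟨j, rfl⟩
    · exact Or.inl ⟨p i, ⟨i, rfl⟩, rfl⟩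
    · exact Or.inr ⟨q j, ⟨j, rfl⟩, rfl⟩

end PrimeFiltration

namespace Ideal

variable {R : Type*} [CommRing R] (I : Ideal R) (u : R)

def mulQuotientColon : (R ⧸ I.colon (span {u})) →ₗ[R] R ⧸ I :=
  (I.colon (span {u})).liftQ (I.mkQ ∘ₗ LinearMap.mulLeft R u) fun r hr => by
    simpa [mem_colon_span_singleton, mul_comm, ← map_mul, Quotient.eq_zero_iff_mem] using hr

@[simp]
theorem mulQuotientColon_mk (x : R) :
    I.mulQuotientColon u (Ideal.Quotient.mk _ x) = Ideal.Quotient.mk I (u * x) :=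
  rfl

theorem mulQuotientColon_injective : Function.Injective (I.mulQuotientColon u) := by
  refine (LinearMap.ker_eq_bot).mp (Submodule.ker_liftQ_eq_bot _ _ _ fun r hr => ?_)
  simpa [mem_colon_span_singleton, mul_comm, ← map_mul, Quotient.eq_zero_iff_mem] using hr

theorem exact_mulQuotientColon_factor :
    Function.Exact (I.mulQuotientColon u)
      (Submodule.factor (le_sup_left : I ≤ I + span {u})) := by
  rw [LinearMap.exact_iff, Submodule.factor, Submodule.ker_mapQ, mulQuotientColon,
    Submodule.range_liftQ, LinearMap.range_comp, Submodule.comap_id,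
    Submodule.map_sup, Submodule.mkQ_map_self, bot_sup_eq]
  congr 1
  ext x
  simp [mem_span_singleton', mul_comm]

theorem ker_factor_add_span_singleton :
    LinearMap.ker (Submodule.factor (le_sup_left : I ≤ I + span {u})) =
      Submodule.span R {Ideal.Quotient.mk I u} := by
  rw [Submodule.factor, Submodule.ker_mapQ, Submodule.comap_id, Submodule.map_sup,
    Submodule.mkQ_map_self, bot_sup_eq, Ideal.span, Submodule.map_span, Set.image_singleton]
  rfl

theorem minimalPrimes_subset_associatedPrimes_quotient [IsNoetherianRing R] :
    I.minimalPrimes ⊆ associatedPrimes R (R ⧸ I) := by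
  simpa only [Ideal.annihilator_quotient] using
    Module.associatedPrimes.minimalPrimes_annihilator_subset_associatedPrimes R (R ⧸ I)

theorem minimalPrimes_colon_subset [IsNoetherianRing R] {I : Ideal R}
    (hI : ∀ P ∈ associatedPrimes R (R ⧸ I), P ∈ I.minimalPrimes) (u : R) :
    (I.colon (span {u})).minimalPrimes ⊆ I.minimalPrimes := fun _ hP =>
  hI _ (associatedPrimes.subset_of_injective (I.mulQuotientColon_injective u)
    (minimalPrimes_subset_associatedPrimes_quotient _ hP))

end Ideal

section Multigraded

variable {K σ : Type*} [Field K] {I : Ideal (MvPolynomial σ K)}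

theorem isClean_iff_exists_relSeries :
    IsClean I ↔ ∃ p : RelSeries (primeFactorRel (MvPolynomial σ K ⧸ I) I.minimalPrimes),
      p.head = ⊥ ∧ p.last = ⊤ ∧ ∀ N ∈ p, IsMultigradedSubmodule I N := by
  constructor
  · rintro ⟨r, M, hM₀, hM, hmono, hgr, hfac⟩
    exact ⟨⟨r, M, fun i => ⟨hmono i.castSucc_lt_succ, hfac i⟩⟩, hM₀, hM,
      fun _ ⟨i, hi⟩ => hi ▸ hgr i⟩
  · rintro ⟨p, hp₀, hp, hgr⟩
    exact ⟨p.length, p, hp₀, hp, Fin.strictMono_iff_lt_succ.mpr fun i => (p.step i).1,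
      fun i => hgr _ ⟨i, rfl⟩, fun i => (p.step i).2⟩

theorem isMultigradedSubmodule_bot : IsMultigradedSubmodule I ⊥ :=
  ⟨∅, by simp⟩

theorem isMultigradedSubmodule_top : IsMultigradedSubmodule I ⊤ := by
  refine ⟨{0}, (Submodule.eq_top_iff'.mpr fun y => ?_).symm⟩
  obtain ⟨x, rfl⟩ := Ideal.Quotient.mk_surjective y
  rw [Set.image_singleton, monomial_zero', C_1]
  refine Submodule.mem_span_singleton.mpr ⟨x, ?_⟩
  rw [← Ideal.Quotient.mk_eq_mk, ← Ideal.Quotient.mk_eq_mk, ← Submodule.Quotient.mk_smul,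
    smul_eq_mul, mul_one]

theorem IsMultigradedSubmodule.map_mulQuotientColon {a : σ →₀ ℕ}
    {N : Submodule (MvPolynomial σ K)
      (MvPolynomial σ K ⧸ I.colon (Ideal.span {monomial a (1 : K)}))}
    (hN : IsMultigradedSubmodule _ N) :
    IsMultigradedSubmodule I (N.map (I.mulQuotientColon (monomial a (1 : K)))) := by
  obtain ⟨A, rfl⟩ := hN
  refine ⟨(a + ·) '' A, ?_⟩
  rw [Submodule.map_span, Set.image_image, Set.image_image]
  congr 1
  refine Set.image_congr fun b _ => ?_
  rw [Ideal.mulQuotientColon_mk, monomial_mul, one_mul]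

theorem IsMultigradedSubmodule.comap_factor {a : σ →₀ ℕ}
    {N : Submodule (MvPolynomial σ K)
      (MvPolynomial σ K ⧸ (I + Ideal.span {monomial a (1 : K)}))}
    (hN : IsMultigradedSubmodule _ N) :
    IsMultigradedSubmodule I (N.comap (Submodule.factor le_sup_left)) := by
  obtain ⟨A, rfl⟩ := hN
  set J := I + Ideal.span {monomial a (1 : K)}
  have hspan : Submodule.span (MvPolynomial σ K)
      ((fun b => Ideal.Quotient.mk J (monomial b (1 : K))) '' A) =
      (Submodule.span (MvPolynomial σ K)
        ((fun b => Ideal.Quotient.mk I (monomial b (1 : K))) '' A)).map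
        (Submodule.factor le_sup_left) := by
    rw [Submodule.map_span, Set.image_image]
    rfl
  refine ⟨insert a A, ?_⟩
  rw [hspan, Submodule.comap_map_eq, Ideal.ker_factor_add_span_singleton, Set.image_insert_eq,
    Submodule.span_insert, sup_comm]

theorem isClean_of_isPrime (hI : I.IsPrime) : IsClean I := by
  have : Nontrivial (MvPolynomial σ K ⧸ I) := Ideal.Quotient.nontrivial_iff.mpr hI.ne_top
  have hstep :
      (⊥ : Submodule _ (MvPolynomial σ K ⧸ I)) ~[primeFactorRel _ I.minimalPrimes] ⊤ :=
    ⟨bot_lt_top, I, by simp [Ideal.minimalPrimes_eq_subsingleton_self],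
      ⟨(Submodule.quotEquivOfEqBot _ (by simp)).trans Submodule.topEquiv⟩⟩
  refine isClean_iff_exists_relSeries.mpr
    ⟨⟨1, ![⊥, ⊤], fun i => by fin_cases i; exact hstep⟩, rfl, rfl, ?_⟩
  rintro _ ⟨i, rfl⟩
  fin_cases i
  · exact isMultigradedSubmodule_bot
  · exact isMultigradedSubmodule_top

theorem isClean_of_isClean_colon_of_isClean_add [Finite σ] {a : σ →₀ ℕ}
    (hI : NoEmbeddedPrimes I)
    (hmin : (I + Ideal.span {monomial a (1 : K)}).minimalPrimes ⊆ I.minimalPrimes)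
    (hcolon : IsClean (I.colon (Ideal.span {monomial a (1 : K)})))
    (hadd : IsClean (I + Ideal.span {monomial a (1 : K)})) : IsClean I := by
  obtain ⟨p, hp₀, hp, hpgr⟩ := isClean_iff_exists_relSeries.mp hcolon
  obtain ⟨q, hq₀, hq, hqgr⟩ := isClean_iff_exists_relSeries.mp hadd
  obtain ⟨s, hs₀, hs, hsgr⟩ := exists_relSeries_primeFactorRel_of_exact
    (I.mulQuotientColon_injective _) (Submodule.factor_surjective _)
    (I.exact_mulQuotientColon_factor _) (Ideal.minimalPrimes_colon_subset hI _) hmin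
    p hp₀ hp q hq₀ hq
  refine isClean_iff_exists_relSeries.mpr ⟨s, hs₀, hs, fun N hN => ?_⟩
  rcases hsgr N hN with ⟨M, hM, rfl⟩ | ⟨M, hM, rfl⟩
  · exact (hpgr M hM).map_mulQuotientColon
  · exact (hqgr M hM).comap_factor

end Multigraded

theorem kClean_isClean_general {K : Type*} [Field K] {n : ℕ}
    (I : Ideal (MvPolynomial (Fin n) K))
    (k : ℕ) (hk : KClean K (Fin n) k I) : IsClean I := by
  induction hk with
  | prime I hI => exact isClean_of_isPrime hI
  | step I a hne hcl _ _ _ ih₁ ih₂ =>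
    exact isClean_of_isClean_colon_of_isClean_add hne hcl.2.2 ih₁ ih₂

/-- Every `k`-clean monomial ideal is clean: if `I ⊆ S = K[x₁,…,xₙ]`
is a monomial ideal which is `k`-clean for some `k ≥ 0`, then `S/I` admits a clean
multigraded prime filtration. -/
theorem kClean_isClean {K : Type*} [Field K] {n : ℕ}
    (I : Ideal (MvPolynomial (Fin n) K)) (hmon : IsMonomialIdeal I)
    (k : ℕ) (hk : KClean K (Fin n) k I) : IsClean I :=
  kClean_isClean_general I k hk
end

section
/- The radical of every k-clean monomial ideal is k-clean. That is, if I ⊆ S is a k-clean monomial ideal, then √I is k-clean. -/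
open MvPolynomial

/-!
For a monomial ideal `I = (x ^ g : g ∈ G)`, the ideal `√I : x ^ v` is again monomial, generated by
the `sqfree g - v`, and it is the intersection of the minimal primes of `I` avoiding `x ^ v`;
so it has no embedded primes and its minimal primes are those of `I` avoiding `x ^ v`.
By induction on `k`-cleanness, every proper `√I : x ^ v` is `k`-clean: if `x ^ a` is the cleaner
of `I` and `c = sqfree a - v`, then `(√I : x ^ v) : x ^ c = √(I : x ^ a) : x ^ (v + a)` and
`(√I : x ^ v) + (x ^ c) = √(I + (x ^ a)) : x ^ v`, so `x ^ c` is a cleaner of `√I : x ^ v` whose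
support is at most that of `a` (unless `c = 0` or `x ^ c ∈ √I : x ^ v`, when one of these two
ideals is `√I : x ^ v` itself). The case `v = 0` is the theorem.
-/

namespace Ideal

variable {R : Type*} [CommRing R]

theorem exists_le_of_sInf_le_of_isPrime {F : Set (Ideal R)} (hF : F.Finite) {P : Ideal R}
    (hP : P.IsPrime) (h : sInf F ≤ P) : ∃ Q ∈ F, Q ≤ P := by
  rw [← hF.coe_toFinset, ← Finset.inf_id_eq_sInf, hP.inf_le'] at h
  simpa using h

theorem IsPrime.colon_singleton_of_notMem {P : Ideal R} (hP : P.IsPrime) {u : R} (hu : u ∉ P) :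
    P.colon {u} = P := by
  ext z
  rw [Submodule.mem_colon_singleton, smul_eq_mul]
  exact ⟨fun h => (hP.mem_or_mem h).resolve_right hu, fun h => P.mul_mem_right u h⟩

theorem colon_singleton_one (J : Ideal R) : J.colon {1} = J := by
  ext z
  rw [Submodule.mem_colon_singleton, smul_eq_mul, mul_one]

theorem colon_singleton_eq_top_iff {J : Ideal R} {u : R} : J.colon {u} = ⊤ ↔ u ∈ J := by
  simp

theorem sInf_colon_singleton {F : Set (Ideal R)} (hF : ∀ Q ∈ F, Q.IsPrime) (u : R) :
    (sInf F).colon {u} = sInf {Q ∈ F | u ∉ Q} := by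
  ext z
  simp only [Submodule.mem_colon_singleton, smul_eq_mul, Submodule.mem_sInf, Set.mem_ofPred_eq]
  refine ⟨fun h Q ⟨hQ, hu⟩ => ((hF Q hQ).mem_or_mem (h Q hQ)).resolve_right hu, fun h Q hQ => ?_⟩
  by_cases hu : u ∈ Q
  · exact Ideal.mul_mem_left Q z hu
  · exact Ideal.mul_mem_right u Q (h Q ⟨hQ, hu⟩)

theorem radical_colon_singleton (J : Ideal R) (u : R) :
    J.radical.colon {u} = sInf {P ∈ J.minimalPrimes | u ∉ P} := by
  rw [← sInf_minimalPrimes, sInf_colon_singleton fun P hP => hP.1.1]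

theorem minimalPrimes_sInf_of_subset {J : Ideal R} {F : Set (Ideal R)} (hF : F.Finite)
    (hFJ : F ⊆ J.minimalPrimes) : (sInf F).minimalPrimes = F := by
  ext P
  refine ⟨fun hP => ?_, fun hP => ⟨⟨(hFJ hP).1.1, sInf_le hP⟩, fun Q hQ hQP => ?_⟩⟩
  · obtain ⟨Q, hQ, hQP⟩ := exists_le_of_sInf_le_of_isPrime hF hP.1.1 hP.1.2
    rwa [le_antisymm (hP.2 ⟨(hFJ hQ).1.1, sInf_le hQ⟩ hQP) hQP]
  · obtain ⟨Q', hQ', hQ'Q⟩ := exists_le_of_sInf_le_of_isPrime hF hQ.1 hQ.2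
    exact ((hFJ hP).2 (hFJ hQ').1 (hQ'Q.trans hQP)).trans hQ'Q

theorem associatedPrimes_quotient_sInf_subset {F : Set (Ideal R)} (hF : F.Finite)
    (hprime : ∀ Q ∈ F, Q.IsPrime) : associatedPrimes R (R ⧸ sInf F) ⊆ F := by
  rintro P ⟨hP, x, hPx⟩
  obtain ⟨y, rfl⟩ := Quotient.mk_surjective x
  have hann : (⊥ : Submodule R (R ⧸ sInf F)).colon {Quotient.mk _ y} = (sInf F).colon {y} := by
    ext r
    rw [Submodule.mem_colon_singleton, Submodule.mem_colon_singleton, Submodule.mem_bot,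
      Algebra.smul_def, Quotient.algebraMap_eq, ← map_mul, Quotient.eq_zero_iff_mem, smul_eq_mul]
  rw [hann, sInf_colon_singleton hprime] at hPx
  obtain ⟨Q, ⟨hQ, hyQ⟩, hQP⟩ :=
    exists_le_of_sInf_le_of_isPrime (hF.subset fun _ h => h.1) hP (hPx ▸ le_radical)
  have hPQ : P ≤ Q := hPx ▸ ((hprime Q hQ).radical_le_iff.2 (sInf_le ⟨hQ, hyQ⟩))
  rwa [le_antisymm hPQ hQP]

variable [IsNoetherianRing R]

theorem minimalPrimes_radical_colon_singleton (J : Ideal R) (u : R) :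
    (J.radical.colon {u}).minimalPrimes = {P ∈ J.minimalPrimes | u ∉ P} := by
  rw [radical_colon_singleton, minimalPrimes_sInf_of_subset
    (J.finite_minimalPrimes_of_isNoetherianRing.subset fun _ h => h.1) fun _ h => h.1]

theorem associatedPrimes_quotient_radical_colon_singleton_subset (J : Ideal R) (u : R) :
    associatedPrimes R (R ⧸ J.radical.colon {u}) ⊆ (J.radical.colon {u}).minimalPrimes := by
  rw [minimalPrimes_radical_colon_singleton, radical_colon_singleton]
  exact associatedPrimes_quotient_sInf_subset
    (J.finite_minimalPrimes_of_isNoetherianRing.subset fun _ h => h.1) fun _ h => h.1.1.1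

end Ideal

namespace MvPolynomial

variable {σ R : Type*} [CommRing R]

/-- The exponent vector of the radical of `x ^ a`. -/
noncomputable def sqfree (a : σ →₀ ℕ) : σ →₀ ℕ := a.mapRange (min · 1) (by simp)

@[simp]
theorem sqfree_apply (a : σ →₀ ℕ) (i : σ) : sqfree a i = min (a i) 1 :=
  Finsupp.mapRange_apply

theorem sqfree_le (a : σ →₀ ℕ) : sqfree a ≤ a := fun i => by simp

variable (R) in
noncomputable abbrev monomialSpan (G : Set (σ →₀ ℕ)) : Ideal (MvPolynomial σ R) :=
  Ideal.span ((fun a => monomial a (1 : R)) '' G)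

theorem monomial_mem_monomialSpan [Nontrivial R] {G : Set (σ →₀ ℕ)} {u : σ →₀ ℕ} :
    monomial u (1 : R) ∈ monomialSpan R G ↔ ∃ g ∈ G, g ≤ u := by
  classical
  simp [mem_ideal_span_monomial_image, support_monomial]

theorem monomialSpan_eq_top_iff [Nontrivial R] {G : Set (σ →₀ ℕ)} :
    monomialSpan R G = ⊤ ↔ (0 : σ →₀ ℕ) ∈ G := by
  rw [Ideal.eq_top_iff_one, one_def, monomial_mem_monomialSpan]
  simp

theorem monomialSpan_union (G H : Set (σ →₀ ℕ)) :
    monomialSpan R (G ∪ H) = monomialSpan R G + monomialSpan R H := by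
  rw [monomialSpan, Set.image_union, Ideal.span_union, Submodule.add_eq_sup]

theorem monomialSpan_singleton (a : σ →₀ ℕ) :
    monomialSpan R {a} = Ideal.span {monomial a (1 : R)} := by
  rw [monomialSpan, Set.image_singleton]

theorem monomialSpan_colon_monomial (G : Set (σ →₀ ℕ)) (v : σ →₀ ℕ) :
    (monomialSpan R G).colon {monomial v 1} = monomialSpan R ((· - v) '' G) := by
  refine le_antisymm (fun f hf => mem_ideal_span_monomial_image.2 fun m hm => ?_) ?_
  · rw [Submodule.mem_colon_singleton, smul_eq_mul] at hf
    have hmv : m + v ∈ (f * monomial v 1).support := by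
      rwa [mem_support_iff, coeff_mul_monomial, mul_one, ← mem_support_iff]
    obtain ⟨g, hg, hgm⟩ := mem_ideal_span_monomial_image.1 hf _ hmv
    exact ⟨g - v, ⟨g, hg, rfl⟩, tsub_le_iff_right.2 hgm⟩
  · refine Ideal.span_le.2 ?_
    rintro _ ⟨_, ⟨g, hg, rfl⟩, rfl⟩
    rw [SetLike.mem_coe, Submodule.mem_colon_singleton, smul_eq_mul, monomial_mul, mul_one]
    exact mem_ideal_span_monomial_image.2 fun m hm =>
      ⟨g, hg, le_tsub_add.trans (Finset.mem_singleton.1 (support_monomial_subset hm)).ge⟩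

theorem isPrime_span_X_image [IsDomain R] (s : Set σ) :
    (Ideal.span (X '' s : Set (MvPolynomial σ R))).IsPrime := by
  classical
  have hinj : Function.Injective (Subtype.val : ↥sᶜ → σ) := Subtype.val_injective
  suffices Ideal.span (X '' s) = RingHom.ker (killCompl (R := R) hinj) from
    this ▸ RingHom.ker_isPrime _
  refine le_antisymm (Ideal.span_le.2 ?_) fun f hf => mem_ideal_span_X_image.2 fun m hm => ?_
  · rintro _ ⟨i, hi, rfl⟩
    simp [killCompl, hi]
  · by_contra! h
    have hsub : ↑m.support ⊆ Set.range (Subtype.val : ↥sᶜ → σ) := fun i hi =>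
      ⟨⟨i, fun his => Finsupp.mem_support_iff.1 hi (h i his)⟩, rfl⟩
    have hcoeff := coeff_killCompl hinj (p := f) (s := m.comapDomain _ hinj.injOn)
    rw [Finsupp.mapDomain_comapDomain _ hinj _ hsub, RingHom.mem_ker.1 hf, coeff_zero] at hcoeff
    exact mem_support_iff.1 hm hcoeff.symm

theorem radical_monomialSpan [IsDomain R] (G : Set (σ →₀ ℕ)) :
    (monomialSpan R G).radical = monomialSpan R (sqfree '' G) := by
  refine le_antisymm (fun f hf => mem_ideal_span_monomial_image.2 fun m hm => ?_) ?_
  · by_contra! h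
    -- every generator involves a variable missing from `x ^ m`
    have hle : monomialSpan R G ≤ Ideal.span (X '' {i | m i = 0}) := by
      refine Ideal.span_le.2 ?_
      rintro _ ⟨g, hg, rfl⟩
      obtain ⟨i, hi⟩ : ∃ i, m i < min (g i) 1 := by
        simpa [Finsupp.le_def] using h _ ⟨g, hg, rfl⟩
      refine mem_ideal_span_X_image.2 fun m' hm' => ⟨i, show m i = 0 by omega, ?_⟩
      rw [Finset.mem_singleton.1 (support_monomial_subset hm')]
      omega
    obtain ⟨i, hi, hmi⟩ := mem_ideal_span_X_image.1
      ((isPrime_span_X_image _).radical_le_iff.2 hle hf) m hm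
    exact hmi hi
  · refine Ideal.span_le.2 ?_
    rintro _ ⟨_, ⟨g, hg, rfl⟩, rfl⟩
    refine ⟨g.degree, ?_⟩
    rw [monomial_pow, one_pow]
    refine monomial_mem_monomialSpan.2 ⟨g, hg, fun i => ?_⟩
    simp only [Finsupp.smul_apply, sqfree_apply, smul_eq_mul]
    rcases Nat.eq_zero_or_pos (g i) with h0 | h0
    · simp [h0]
    · rw [min_eq_right h0, mul_one]
      exact Finsupp.le_degree i g

theorem radical_monomialSpan_colon_monomial [IsDomain R] (G : Set (σ →₀ ℕ)) (v : σ →₀ ℕ) :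
    (monomialSpan R G).radical.colon {monomial v 1} =
      monomialSpan R ((fun g => sqfree g - v) '' G) := by
  rw [radical_monomialSpan, monomialSpan_colon_monomial, Set.image_image]

theorem radical_monomialSpan_colon_colon [IsDomain R] (G : Set (σ →₀ ℕ)) (a v : σ →₀ ℕ) :
    ((monomialSpan R G).radical.colon {monomial v 1}).colon {monomial (sqfree a - v) 1} =
      ((monomialSpan R G).colon {monomial a 1}).radical.colon {monomial (v + a) 1} := by
  rw [radical_monomialSpan_colon_monomial, monomialSpan_colon_monomial,
    monomialSpan_colon_monomial, radical_monomialSpan_colon_monomial, Set.image_image,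
    Set.image_image]
  refine congrArg _ (Set.image_congr fun g _ => Finsupp.ext fun i => ?_)
  simp only [Finsupp.tsub_apply, Finsupp.add_apply, sqfree_apply]
  omega

theorem radical_monomialSpan_colon_add [IsDomain R] (G : Set (σ →₀ ℕ)) (a v : σ →₀ ℕ) :
    (monomialSpan R G).radical.colon {monomial v 1} + Ideal.span {monomial (sqfree a - v) 1} =
      (monomialSpan R G + Ideal.span {monomial a 1}).radical.colon {monomial v 1} := by
  rw [← monomialSpan_singleton, ← monomialSpan_singleton, ← monomialSpan_union,
    radical_monomialSpan_colon_monomial, radical_monomialSpan_colon_monomial,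
    ← monomialSpan_union, Set.image_union, Set.image_singleton]

theorem monomialSpan_add_span_monomial_ne_top [Nontrivial R] {G : Set (σ →₀ ℕ)}
    (hG : monomialSpan R G ≠ ⊤) {c : σ →₀ ℕ} (hc : c ≠ 0) :
    monomialSpan R G + Ideal.span {monomial c 1} ≠ ⊤ := by
  rw [← monomialSpan_singleton, ← monomialSpan_union, Ne, monomialSpan_eq_top_iff]
  rw [Ne, monomialSpan_eq_top_iff] at hG
  rintro (h | h)
  exacts [hG h, hc (Set.mem_singleton_iff.1 h).symm]

end MvPolynomial

open MvPolynomial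

section

variable {K σ : Type*} [Field K]

theorem IsMonomialIdeal.colon_monomial {I : Ideal (MvPolynomial σ K)} (hI : IsMonomialIdeal I)
    (a : σ →₀ ℕ) : IsMonomialIdeal (I.colon {monomial a (1 : K)}) := by
  obtain ⟨G, rfl⟩ := hI
  exact ⟨_, monomialSpan_colon_monomial G a⟩

theorem IsMonomialIdeal.add_span_monomial {I : Ideal (MvPolynomial σ K)} (hI : IsMonomialIdeal I)
    (a : σ →₀ ℕ) : IsMonomialIdeal (I + Ideal.span {monomial a (1 : K)}) := by
  obtain ⟨G, rfl⟩ := hI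
  refine ⟨G ∪ {a}, ?_⟩
  change monomialSpan K G + _ = monomialSpan K (G ∪ {a})
  rw [monomialSpan_union, monomialSpan_singleton]

theorem noEmbeddedPrimes_radical_colon_singleton [Finite σ] (J : Ideal (MvPolynomial σ K))
    (u : MvPolynomial σ K) : NoEmbeddedPrimes (J.radical.colon {u}) :=
  fun _ hP => Ideal.associatedPrimes_quotient_radical_colon_singleton_subset J u hP

theorem KClean.ne_top {k : ℕ} {I : Ideal (MvPolynomial σ K)} (hI : KClean K σ k I) : I ≠ ⊤ := by
  cases hI with
  | prime _ h => exact h.ne_top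
  | step _ a _ hcl => exact fun h => hcl.2.1 (h ▸ Submodule.mem_top)

theorem KClean.radical_colon_monomial [Finite σ] {k : ℕ} {I : Ideal (MvPolynomial σ K)}
    (hk : KClean K σ k I) (hI : IsMonomialIdeal I) {v : σ →₀ ℕ}
    (hv : monomial v (1 : K) ∉ I.radical) :
    KClean K σ k (I.radical.colon {monomial v 1}) := by
  induction hk generalizing v with
  | prime I hP =>
    rw [hP.radical] at hv ⊢
    rw [hP.colon_singleton_of_notMem hv]
    exact .prime I hP
  | step I a _ hcl hsupp _ _ ih_colon ih_sum =>
    rw [Ideal.colon_span] at ih_colon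
    obtain ⟨G, rfl⟩ := hI
    set X := (monomialSpan K G).radical.colon {monomial v (1 : K)}
    set c := sqfree a - v
    have hX : X ≠ ⊤ := by rwa [Ne, Ideal.colon_singleton_eq_top_iff]
    have kClean_colon (h : monomial c 1 ∉ X) : KClean K σ k (X.colon {monomial c 1}) := by
      rw [← Ideal.colon_singleton_eq_top_iff, radical_monomialSpan_colon_colon] at h
      rw [radical_monomialSpan_colon_colon]
      exact ih_colon (IsMonomialIdeal.colon_monomial ⟨G, rfl⟩ a)
        (by rwa [Ideal.colon_singleton_eq_top_iff] at h)
    have kClean_add (h : X + Ideal.span {monomial c 1} ≠ ⊤) :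
        KClean K σ k (X + Ideal.span {monomial c 1}) := by
      rw [radical_monomialSpan_colon_add] at h ⊢
      exact ih_sum (IsMonomialIdeal.add_span_monomial ⟨G, rfl⟩ a)
        (by rwa [Ne, Ideal.colon_singleton_eq_top_iff] at h)
    by_cases hcX : monomial c 1 ∈ X
    · have hXc : X + Ideal.span {monomial c 1} = X := by
        rwa [Submodule.add_eq_sup, sup_eq_left, Ideal.span_singleton_le_iff_mem]
      rw [← hXc] at hX ⊢
      exact kClean_add hX
    by_cases hc0 : c = 0
    · have hXc : X.colon {monomial c 1} = X := by
        rw [hc0, ← one_def, Ideal.colon_singleton_one]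
      rw [← hXc]
      exact kClean_colon hcX
    refine .step X c (noEmbeddedPrimes_radical_colon_singleton _ _) ⟨hc0, hcX, ?_⟩ ?_ ?_ ?_
    · rw [radical_monomialSpan_colon_add, Ideal.minimalPrimes_radical_colon_singleton,
        Ideal.minimalPrimes_radical_colon_singleton]
      exact fun P hP => ⟨hcl.2.2 hP.1, hP.2⟩
    · exact (Finset.card_le_card (Finsupp.support_mono (tsub_le_self.trans (sqfree_le a)))).trans
        hsupp
    · rw [Ideal.colon_span]
      exact kClean_colon hcX
    · have hXG : X = monomialSpan K ((fun g => sqfree g - v) '' G) :=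
        radical_monomialSpan_colon_monomial G v
      rw [hXG] at hX
      exact kClean_add (hXG ▸ monomialSpan_add_span_monomial_ne_top hX hc0)

end

/-- The radical of every `k`-clean monomial ideal is `k`-clean. -/
theorem kClean_radical {K : Type*} [Field K] {n : ℕ}
    (I : Ideal (MvPolynomial (Fin n) K)) (hmon : IsMonomialIdeal I)
    (k : ℕ) (hk : KClean K (Fin n) k I) : KClean K (Fin n) k I.radical := by
  have h1 : (1 : MvPolynomial (Fin n) K) ∉ I.radical := fun h =>
    hk.ne_top (Ideal.radical_eq_top.1 ((Ideal.eq_top_iff_one _).2 h))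
  have h := hk.radical_colon_monomial hmon (v := 0) (by rwa [← one_def])
  rwa [← one_def, Ideal.colon_singleton_one] at h
end

section
/- Let I ⊆ S be a monomial complete intersection ideal, i.e., I is minimally generated by monomials M_1,…,M_r forming a regular sequence (equivalently, gcd(M_i, M_j) = 1 for all i ≠ j). Then I is 0-clean. -/
open MvPolynomial

/-!
Write `I = (x^{b_1}, …, x^{b_r})` with pairwise disjoint supports. The minimal primes of `I` are
the ideals `(x_{φ 1}, …, x_{φ r})` with `φ i ∈ supp b_i`, and every associated prime of `S/I` is one
of them: a monomial of an element outside `I` singles out such a `φ` for which `I` lies in the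
primary ideal `(x_{φ 1}^{b_1(φ 1)}, …)`. If some generator is not a variable, choose `x_j` dividing
it properly; then `I : x_j` and `I + (x_j)` are again monomial complete intersections with smaller
exponents (divide that generator by `x_j`, resp. replace it by `x_j`), and the minimal primes of
`I + (x_j)` are among those of `I`, so `x_j` is a cleaner. Induction on the exponents ends at
ideals generated by variables, which are prime.
-/

theorem Ideal.exists_pow_mul_mem_of_mul_mem_of_sub_mem_radical {S : Type*} [CommRing S]
    {Q : Ideal S} {g g₀ f : S} (h : g * f ∈ Q) (h₀ : g - g₀ ∈ Q.radical) :
    ∃ N : ℕ, g₀ ^ N * f ∈ Q := by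
  obtain ⟨N, hN⟩ := h₀
  have hN' : (g₀ - g) ^ N ∈ Q := by
    rw [← neg_sub, neg_pow]
    exact Q.mul_mem_left _ hN
  obtain ⟨c, hc⟩ := sub_dvd_pow_sub_pow g₀ (g₀ - g) N
  rw [sub_sub_cancel] at hc
  refine ⟨N, ?_⟩
  have : g₀ ^ N * f = c * (g * f) + (g₀ - g) ^ N * f := by linear_combination f * hc
  rw [this]
  exact Q.add_mem (Q.mul_mem_left _ h) (Q.mul_mem_right _ hN')

namespace MvPolynomial

variable {σ ι R : Type*}

section CommSemiring
variable [CommSemiring R]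

variable (R) in
noncomputable def monomialIdeal (b : ι → σ →₀ ℕ) : Ideal (MvPolynomial σ R) :=
  Ideal.span (Set.range fun i => monomial (b i) 1)

variable (R) in
noncomputable def varIdeal (s : Set σ) : Ideal (MvPolynomial σ R) :=
  Ideal.span (X '' s)

theorem mem_monomialIdeal {b : ι → σ →₀ ℕ} {f : MvPolynomial σ R} :
    f ∈ monomialIdeal R b ↔ ∀ m ∈ f.support, ∃ i, b i ≤ m := by
  rw [monomialIdeal, Set.range_comp' (fun a => monomial a (1 : R)) b,
    mem_ideal_span_monomial_image]
  simp

theorem monomial_mem_monomialIdeal [Nontrivial R] {b : ι → σ →₀ ℕ} {a : σ →₀ ℕ} :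
    monomial a (1 : R) ∈ monomialIdeal R b ↔ ∃ i, b i ≤ a := by
  classical
  simp [mem_monomialIdeal, support_monomial]

theorem monomialIdeal_le_monomialIdeal {κ : Type*} {b : ι → σ →₀ ℕ} {c : κ → σ →₀ ℕ}
    (h : ∀ i, ∃ k, c k ≤ b i) : monomialIdeal R b ≤ monomialIdeal R c := by
  rw [monomialIdeal, Ideal.span_le, Set.range_subset_iff]
  intro i
  rw [SetLike.mem_coe, mem_monomialIdeal]
  intro m hm
  rw [Finset.mem_singleton.mp (support_monomial_subset hm)]
  exact h i

theorem mem_varIdeal {s : Set σ} {f : MvPolynomial σ R} :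
    f ∈ varIdeal R s ↔ ∀ m ∈ f.support, ∃ l ∈ s, m l ≠ 0 :=
  mem_ideal_span_X_image

theorem X_mem_varIdeal [Nontrivial R] {s : Set σ} {l : σ} :
    (X l : MvPolynomial σ R) ∈ varIdeal R s ↔ l ∈ s := by
  classical
  simp [mem_varIdeal, support_X, Finsupp.single_apply]

theorem varIdeal_le_iff {s : Set σ} {P : Ideal (MvPolynomial σ R)} :
    varIdeal R s ≤ P ↔ ∀ l ∈ s, X l ∈ P := by
  simp [varIdeal, Ideal.span_le, Set.subset_def]

theorem exists_X_mem_of_monomial_mem {P : Ideal (MvPolynomial σ R)} (hP : P.IsPrime)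
    {a : σ →₀ ℕ} (h : monomial a (1 : R) ∈ P) : ∃ l ∈ a.support, X l ∈ P := by
  rw [monomial_eq, C_1, one_mul, Finsupp.prod, hP.prod_mem_iff] at h
  obtain ⟨l, hl, hpow⟩ := h
  exact ⟨l, hl, hP.mem_of_pow_mem _ hpow⟩

theorem monomialIdeal_single_one (φ : ι → σ) :
    monomialIdeal R (fun i => Finsupp.single (φ i) 1) = varIdeal R (Set.range φ) := by
  rw [varIdeal, ← Set.range_comp]
  rfl

theorem exists_monomialIdeal_eq_varIdeal {b : ι → σ →₀ ℕ} (hb : ∀ i, b i ≠ 0)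
    (h : ∀ i j, ¬ Finsupp.single j 1 < b i) :
    ∃ φ : ι → σ, monomialIdeal R b = varIdeal R (Set.range φ) := by
  have h' i : ∃ l, b i = Finsupp.single l 1 := by
    obtain ⟨l, hl⟩ := Finsupp.support_nonempty_iff.mpr (hb i)
    have hle : Finsupp.single l 1 ≤ b i :=
      Finsupp.single_le_iff.mpr (Nat.one_le_iff_ne_zero.mpr (Finsupp.mem_support_iff.mp hl))
    exact ⟨l, (hle.lt_or_eq.resolve_left (h i l)).symm⟩
  choose φ hφ using h'
  refine ⟨φ, ?_⟩
  rw [show b = fun i => Finsupp.single (φ i) 1 from _root_.funext hφ, monomialIdeal_single_one]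

theorem monomialIdeal_colon_monomial (b : ι → σ →₀ ℕ) (u : σ →₀ ℕ) :
    (monomialIdeal R b).colon (Ideal.span {monomial u (1 : R)}) =
      monomialIdeal R fun i => b i - u := by
  ext g
  rw [Ideal.mem_colon_span_singleton, mem_monomialIdeal, mem_monomialIdeal]
  constructor
  · intro h m hm
    have hmu : m + u ∈ (g * monomial u 1).support := by
      rwa [mem_support_iff, coeff_mul_monomial, mul_one, ← mem_support_iff]
    obtain ⟨i, hi⟩ := h _ hmu
    exact ⟨i, tsub_le_iff_right.mpr hi⟩
  · intro h m hm
    rw [mem_support_iff, coeff_mul_monomial'] at hm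
    obtain ⟨hum, hm⟩ := ite_ne_right_iff.mp hm
    obtain ⟨i, hi⟩ := h _ (mem_support_iff.mpr (by rwa [mul_one] at hm))
    exact ⟨i, (tsub_add_cancel_of_le hum).symm ▸ tsub_le_iff_right.mp hi⟩

theorem monomialIdeal_update_of_le [DecidableEq ι] {b : ι → σ →₀ ℕ} {i₀ : ι} {u : σ →₀ ℕ}
    (hu : u ≤ b i₀) :
    monomialIdeal R (Function.update b i₀ u) = monomialIdeal R b + Ideal.span {monomial u 1} := by
  apply le_antisymm
  · rw [monomialIdeal, Ideal.span_le, Set.range_subset_iff]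
    intro i
    rw [SetLike.mem_coe]
    rcases eq_or_ne i i₀ with rfl | hi
    · rw [Function.update_self]
      exact Submodule.mem_sup_right (Ideal.mem_span_singleton_self _)
    · rw [Function.update_of_ne hi]
      exact Submodule.mem_sup_left (Ideal.subset_span ⟨i, rfl⟩)
  · refine sup_le (monomialIdeal_le_monomialIdeal fun i => ⟨i, update_le_self_iff.mpr hu i⟩) ?_
    rw [Ideal.span_singleton_le_iff_mem, monomialIdeal]
    exact Ideal.subset_span ⟨i₀, by simp⟩

theorem monomial_single_notMem_monomialIdeal [Nontrivial R] {b : ι → σ →₀ ℕ} (hb : ∀ i, b i ≠ 0)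
    (hco : Pairwise fun i j => Disjoint (b i).support (b j).support) {i₀ : ι} {j : σ}
    (hj : Finsupp.single j 1 < b i₀) :
    monomial (Finsupp.single j 1) (1 : R) ∉ monomialIdeal R b := by
  rw [monomial_mem_monomialIdeal]
  rintro ⟨i, hi⟩
  rcases eq_or_ne i i₀ with rfl | hii₀
  · exact hj.not_ge hi
  · obtain ⟨l, hl⟩ := Finsupp.support_nonempty_iff.mpr (hb i)
    obtain rfl : l = j := by simpa using Finsupp.support_mono hi hl
    exact Finset.disjoint_left.mp (hco hii₀) hl (Finsupp.support_mono hj.le (by simp))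

end CommSemiring

section CommRing
variable [CommRing R]

theorem isPrime_varIdeal [IsDomain R] (s : Set σ) : (varIdeal R s).IsPrime := by
  classical
  let ρ : MvPolynomial σ R →ₐ[R] MvPolynomial σ R := aeval fun l => if l ∈ s then 0 else X l
  have hsub : ∀ f, f - ρ f ∈ varIdeal R s := by
    intro f
    induction f using MvPolynomial.induction_on with
    | C a => simp [ρ]
    | add p q hp hq => simpa [add_sub_add_comm] using Ideal.add_mem _ hp hq
    | mul_X p l hp =>
      have hX : X l - ρ (X l) ∈ varIdeal R s := by
        by_cases hl : l ∈ s
        · simpa [ρ, hl] using X_mem_varIdeal.mpr hl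
        · simp [ρ, hl]
      have : p * X l - ρ (p * X l) = (p - ρ p) * X l + ρ p * (X l - ρ (X l)) := by
        rw [map_mul]; ring
      rw [this]
      exact Ideal.add_mem _ (Ideal.mul_mem_right _ _ hp) (Ideal.mul_mem_left _ _ hX)
  have : varIdeal R s = RingHom.ker ρ := by
    refine le_antisymm ?_ fun f hf => by simpa [RingHom.mem_ker.mp hf] using hsub f
    rw [varIdeal_le_iff]
    intro l hl
    simp [ρ, hl]
  rw [this]
  exact RingHom.ker_isPrime _

attribute [local instance] weightedGradedAlgebra in
theorem weightedHomogeneousComponent_mul_of_isWeightedHomogeneous_zero {M : Type*}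
    [AddCommMonoid M] [DecidableEq M] {w : σ → M} {c : MvPolynomial σ R}
    (hc : IsWeightedHomogeneous w c 0) (f : MvPolynomial σ R) (m : M) :
    weightedHomogeneousComponent w m (c * f) = c * weightedHomogeneousComponent w m f := by
  rw [← weightedDecomposition.decompose'_apply, ← weightedDecomposition.decompose'_apply]
  exact DirectSum.coe_decompose_mul_of_left_mem_zero (weightedHomogeneousSubmodule R w) hc

section MinimalPrimes

variable {b c : ι → σ →₀ ℕ} {φ : ι → σ}

theorem monomialIdeal_le_varIdeal (hφ : ∀ i, φ i ∈ (b i).support) :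
    monomialIdeal R b ≤ varIdeal R (Set.range φ) := by
  rw [monomialIdeal, Ideal.span_le, Set.range_subset_iff]
  intro i
  rw [SetLike.mem_coe, mem_varIdeal]
  intro m hm
  rw [Finset.mem_singleton.mp (support_monomial_subset hm)]
  exact ⟨φ i, ⟨i, rfl⟩, Finsupp.mem_support_iff.mp (hφ i)⟩

variable [IsDomain R]

theorem varIdeal_mem_minimalPrimes
    (hco : Pairwise fun i j => Disjoint (b i).support (b j).support) (hφ : ∀ i, φ i ∈ (b i).support) :
    varIdeal R (Set.range φ) ∈ (monomialIdeal R b).minimalPrimes := by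
  refine ⟨⟨isPrime_varIdeal _, monomialIdeal_le_varIdeal hφ⟩, fun Q ⟨hQ, hbQ⟩ hQφ => ?_⟩
  rw [varIdeal_le_iff]
  rintro _ ⟨i, rfl⟩
  obtain ⟨l, hl, hXl⟩ := exists_X_mem_of_monomial_mem hQ (hbQ (Ideal.subset_span ⟨i, rfl⟩))
  obtain ⟨k, rfl⟩ := X_mem_varIdeal.mp (hQφ hXl)
  obtain rfl : k = i := hco.eq (Finset.not_disjoint_iff.mpr ⟨φ k, hφ k, hl⟩)
  exact hXl

theorem exists_eq_varIdeal_of_mem_minimalPrimes {P : Ideal (MvPolynomial σ R)}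
    (hP : P ∈ (monomialIdeal R b).minimalPrimes) :
    ∃ φ : ι → σ, (∀ i, φ i ∈ (b i).support) ∧ P = varIdeal R (Set.range φ) := by
  have h i : ∃ l ∈ (b i).support, X l ∈ P :=
    exists_X_mem_of_monomial_mem hP.1.1 (hP.1.2 (Ideal.subset_span ⟨i, rfl⟩))
  choose φ hφ hXφ using h
  have hle : varIdeal R (Set.range φ) ≤ P := by
    rw [varIdeal_le_iff]
    rintro _ ⟨i, rfl⟩
    exact hXφ i
  exact ⟨φ, hφ, le_antisymm (hP.2 ⟨isPrime_varIdeal _, monomialIdeal_le_varIdeal hφ⟩ hle) hle⟩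

theorem minimalPrimes_monomialIdeal_subset
    (hco : Pairwise fun i j => Disjoint (b i).support (b j).support) (hcb : c ≤ b) :
    (monomialIdeal R c).minimalPrimes ⊆ (monomialIdeal R b).minimalPrimes := by
  intro P hP
  obtain ⟨φ, hφ, rfl⟩ := exists_eq_varIdeal_of_mem_minimalPrimes hP
  exact varIdeal_mem_minimalPrimes hco fun i => Finsupp.support_mono (hcb i) (hφ i)

end MinimalPrimes

section PowersOfVariables

variable (φ : ι → σ) (a : ι → ℕ)

theorem varIdeal_le_radical_monomialIdeal_single :
    varIdeal R (Set.range φ) ≤ (monomialIdeal R fun i => Finsupp.single (φ i) (a i)).radical := by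
  rw [varIdeal_le_iff]
  rintro _ ⟨i, rfl⟩
  refine ⟨a i, ?_⟩
  rw [X_pow_eq_monomial]
  exact Ideal.subset_span ⟨i, rfl⟩

variable [DecidableEq σ]

def coordWeight : σ → ι → ℕ := fun l i => if φ i = l then 1 else 0

theorem weight_coordWeight (m : σ →₀ ℕ) :
    Finsupp.weight (coordWeight φ) m = fun i => m (φ i) := by
  funext i
  simp +contextual [coordWeight, Finsupp.weight_apply, Finsupp.sum, Finset.sum_apply, eq_comm]

variable [IsDomain R]

theorem mem_of_mul_mem_of_isWeightedHomogeneous_zero {c f : MvPolynomial σ R} (hc₀ : c ≠ 0)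
    (hc : IsWeightedHomogeneous (coordWeight φ) c 0)
    (h : c * f ∈ monomialIdeal R fun i => Finsupp.single (φ i) (a i)) :
    f ∈ monomialIdeal R fun i => Finsupp.single (φ i) (a i) := by
  classical
  rw [mem_monomialIdeal] at h ⊢
  intro m hm
  have hf : weightedHomogeneousComponent (coordWeight φ) (fun i => m (φ i)) f ≠ 0 := by
    refine ne_zero_iff.mpr ⟨m, ?_⟩
    rwa [coeff_weightedHomogeneousComponent, weight_coordWeight, if_pos rfl, ← mem_support_iff]
  obtain ⟨m', hm'⟩ := ne_zero_iff.mp (mul_ne_zero hc₀ hf)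
  rw [← weightedHomogeneousComponent_mul_of_isWeightedHomogeneous_zero hc,
    coeff_weightedHomogeneousComponent, weight_coordWeight] at hm'
  obtain ⟨hm'm, hm'⟩ := ite_ne_right_iff.mp hm'
  obtain ⟨i, hi⟩ := h m' (mem_support_iff.mpr hm')
  refine ⟨i, ?_⟩
  rw [Finsupp.single_le_iff] at hi ⊢
  exact hi.trans_eq (congr_fun hm'm i)

theorem mem_of_mul_mem_of_notMem_varIdeal {g f : MvPolynomial σ R}
    (h : g * f ∈ monomialIdeal R fun i => Finsupp.single (φ i) (a i))
    (hg : g ∉ varIdeal R (Set.range φ)) :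
    f ∈ monomialIdeal R fun i => Finsupp.single (φ i) (a i) := by
  classical
  set g₀ := weightedHomogeneousComponent (coordWeight φ) 0 g
  have hg₀ : IsWeightedHomogeneous (coordWeight φ) g₀ 0 :=
    weightedHomogeneousComponent_isWeightedHomogeneous _ _
  have hsub : g - g₀ ∈ varIdeal R (Set.range φ) := by
    rw [mem_varIdeal]
    intro m hm
    rw [mem_support_iff, coeff_sub, coeff_weightedHomogeneousComponent, weight_coordWeight] at hm
    obtain ⟨i, hi⟩ : ∃ i, m (φ i) ≠ 0 := by
      by_contra! h0
      simp [show (fun i => m (φ i)) = 0 from _root_.funext h0] at hm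
    exact ⟨φ i, ⟨i, rfl⟩, hi⟩
  have hg₀ne : g₀ ≠ 0 := by
    rintro h0
    rw [h0, sub_zero] at hsub
    exact hg hsub
  obtain ⟨N, hN⟩ := Ideal.exists_pow_mul_mem_of_mul_mem_of_sub_mem_radical h
    (varIdeal_le_radical_monomialIdeal_single φ a hsub)
  exact mem_of_mul_mem_of_isWeightedHomogeneous_zero φ a (pow_ne_zero N hg₀ne)
    (by simpa using hg₀.pow N) hN

end PowersOfVariables

end CommRing

section Field

variable {K : Type*} [Field K] {b : ι → σ →₀ ℕ}

theorem noEmbeddedPrimes_monomialIdeal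
    (hco : Pairwise fun i j => Disjoint (b i).support (b j).support) :
    NoEmbeddedPrimes (monomialIdeal K b) := by
  classical
  rintro P ⟨hP, x, hPx⟩
  obtain ⟨f, rfl⟩ := Ideal.Quotient.mk_surjective x
  have hmem g : g ∈ P ↔ ∃ k : ℕ, g ^ k * f ∈ monomialIdeal K b := by
    rw [hPx]
    refine exists_congr fun k => ?_
    rw [Submodule.mem_colon_singleton, Submodule.mem_bot, ← Ideal.Quotient.mk_eq_mk,
      ← Submodule.Quotient.mk_smul, smul_eq_mul, Submodule.Quotient.mk_eq_zero]
  have hbP : monomialIdeal K b ≤ P := fun g hg =>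
    (hmem g).mpr ⟨1, by simpa using Ideal.mul_mem_right f _ hg⟩
  have hf : f ∉ monomialIdeal K b := fun hf =>
    hP.ne_top <| (Ideal.eq_top_iff_one _).mpr <| (hmem 1).mpr ⟨0, by simpa using hf⟩
  obtain ⟨m₀, hm₀, hm₀b⟩ : ∃ m₀ ∈ f.support, ∀ i, ¬ b i ≤ m₀ := by
    simpa [mem_monomialIdeal] using hf
  have h i : ∃ l, m₀ l < b i l := by simpa [Finsupp.le_def] using hm₀b i
  choose φ hφ using h
  have hφb i : φ i ∈ (b i).support := Finsupp.mem_support_iff.mpr (hφ i).ne_bot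
  -- `m₀` is a monomial of `f` outside the `varIdeal (range φ)`-primary ideal `Q ⊇ I`
  set Q : Ideal (MvPolynomial σ K) := monomialIdeal K fun i => Finsupp.single (φ i) (b i (φ i))
  have hbQ : monomialIdeal K b ≤ Q :=
    monomialIdeal_le_monomialIdeal fun i => ⟨i, Finsupp.single_le_iff.mpr le_rfl⟩
  have hfQ : f ∉ Q := fun hfQ => by
    obtain ⟨i, hi⟩ := mem_monomialIdeal.mp hfQ m₀ hm₀
    exact (hφ i).not_ge (Finsupp.single_le_iff.mp hi)
  have hPφ : P ≤ varIdeal K (Set.range φ) := by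
    intro g hg
    by_contra hgφ
    obtain ⟨k, hk⟩ := (hmem g).mp hg
    exact hfQ <| mem_of_mul_mem_of_notMem_varIdeal φ _ (hbQ hk)
      fun hgk => hgφ ((isPrime_varIdeal (R := K) _).mem_of_pow_mem k hgk)
  have hmin := varIdeal_mem_minimalPrimes (R := K) hco hφb
  rwa [le_antisymm hPφ (hmin.2 ⟨hP, hbP⟩ hPφ)]

theorem isCleaner_single (hb : ∀ i, b i ≠ 0)
    (hco : Pairwise fun i j => Disjoint (b i).support (b j).support) {i₀ : ι} {j : σ}
    (hj : Finsupp.single j 1 < b i₀) :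
    IsCleaner (monomialIdeal K b) (Finsupp.single j 1) := by
  classical
  refine ⟨by simp, monomial_single_notMem_monomialIdeal hb hco hj, ?_⟩
  rw [← monomialIdeal_update_of_le hj.le]
  exact minimalPrimes_monomialIdeal_subset hco (update_le_self_iff.mpr hj.le)

theorem kClean_zero_monomialIdeal [Finite ι] (b : ι → σ →₀ ℕ) (hb : ∀ i, b i ≠ 0)
    (hco : Pairwise fun i j => Disjoint (b i).support (b j).support) :
    KClean K σ 0 (monomialIdeal K b) := by
  classical
  induction b using WellFoundedLT.induction with
  | ind b ih =>
  by_cases h : ∃ i₀ j, Finsupp.single j 1 < b i₀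
  · obtain ⟨i₀, j, hj⟩ := h
    have hxj := monomial_single_notMem_monomialIdeal (R := K) hb hco hj
    have ih' {c} (hcb : c < b) (hc : ∀ i, c i ≠ 0) : KClean K σ 0 (monomialIdeal K c) :=
      ih c hcb hc <| hco.mono fun i i' h =>
        h.mono (Finsupp.support_mono (hcb.le i)) (Finsupp.support_mono (hcb.le i'))
    refine .step _ _ (noEmbeddedPrimes_monomialIdeal hco) (isCleaner_single hb hco hj) (by simp)
      ?_ ?_
    · rw [monomialIdeal_colon_monomial]
      have hlt : b i₀ - Finsupp.single j 1 < b i₀ :=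
        tsub_le_self.lt_of_ne fun h => Finsupp.single_ne_zero.mpr one_ne_zero
          (left_eq_add.mp ((tsub_eq_iff_eq_add_of_le hj.le).mp h))
      -- the new exponents are nonzero because `x_j ∉ I`
      exact ih' (Pi.lt_def.mpr ⟨fun i => tsub_le_self, i₀, hlt⟩)
        fun i h0 => hxj (monomial_mem_monomialIdeal.mpr ⟨i, tsub_eq_zero_iff_le.mp h0⟩)
    · rw [← monomialIdeal_update_of_le hj.le]
      refine ih' (update_lt_self_iff.mpr hj) fun i => ?_
      rcases eq_or_ne i i₀ with rfl | hi
      · simp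
      · simpa [hi] using hb i
  · push Not at h
    obtain ⟨φ, hφ⟩ := exists_monomialIdeal_eq_varIdeal (R := K) hb h
    rw [hφ]
    exact .prime _ (isPrime_varIdeal _)

end Field

end MvPolynomial

/-- Every monomial complete intersection ideal, i.e. an ideal minimally
generated by pairwise coprime non-unit monomials `M₁, …, M_r` (a regular sequence),
is `0`-clean. -/
theorem monomial_complete_intersection_zeroClean {K : Type*} [Field K] {n : ℕ}
    (r : ℕ) (b : Fin r → (Fin n →₀ ℕ)) (hb : ∀ i, b i ≠ 0)
    (hcoprime : ∀ i j, i ≠ j → Disjoint (b i).support (b j).support)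
    (I : Ideal (MvPolynomial (Fin n) K))
    (hI : I = Ideal.span (Set.range fun i : Fin r => (monomial (b i) (1 : K)))) :
    KClean K (Fin n) 0 I := by
  subst hI
  exact MvPolynomial.kClean_zero_monomialIdeal b hb hcoprime
end
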